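/- Let A₃ ∈ ℝ^{(N+1)×(N+1)} be the tridiagonal matrix with diagonal entries all equal to v, superdiagonal entries g₀ = α/3, gᵢ = (i+1)/(2i+3)·α for i = 1,…,N−1, and subdiagonal entries f₁ = α, fᵢ = i/(2i−1)·α for i = 2,…,N, with α ≠ 0. Then all eigenvalues of A₃ are real and pairwise distinct, and each has the form v + s·α for some real s. -/

import Mathlib

/-- The tridiagonal matrix `A₃^{(N,N)} ∈ ℝ^{(N+1)×(N+1)}` (0-indexed): diagonal `v`;
superdiagonal `(0,1)`-entry `α/3` and `(r,r+1)`-entry `((r+1)/(2r+3))·α` for `r ≥ 1`;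
subdiagonal `(1,0)`-entry `α` and `(r+1,r)`-entry `((r+1)/(2r+1))·α` for `r ≥ 1`. -/
noncomputable def A3mat (N : ℕ) (v α : ℝ) : Matrix (Fin (N + 1)) (Fin (N + 1)) ℝ :=
  Matrix.of fun i j =>
    if (i : ℕ) = (j : ℕ) then v
    else if (j : ℕ) = (i : ℕ) + 1 then
      (if (i : ℕ) = 0 then α / 3 else (((i : ℕ) : ℝ) + 1) / (2 * ((i : ℕ) : ℝ) + 3) * α)
    else if (i : ℕ) = (j : ℕ) + 1 then
      (if (j : ℕ) = 0 then α else (((j : ℕ) : ℝ) + 1) / (2 * ((j : ℕ) : ℝ) + 1) * α)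
    else 0


/-!
Conjugating by the positive diagonal matrix `D` with `D (k+1) / D k = √(T (k+1) k / T k (k+1))`
turns a real tridiagonal matrix `T` whose off-diagonal pairs have positive products into a
symmetric tridiagonal matrix with nonzero off-diagonal entries and the same characteristic
polynomial, so the eigenvalues are real. They are simple: the rows give a three-term recurrence,
so an eigenvector is determined by its first coordinate, whereas a repeated eigenvalue of a
Hermitian matrix has two orthonormal eigenvectors. For `A₃` these products are `α²/3` and
`(k+1)²α² / ((2k+1)(2k+3))`.
-/

theorem div_pos_of_mul_pos {K : Type*} [Field K] [LinearOrder K] [IsStrictOrderedRing K]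
    {a b : K} (h : 0 < a * b) : 0 < b / a :=
  div_pos_iff.mpr (mul_pos_iff.mp (mul_comm a b ▸ h))

namespace Matrix

variable {n : ℕ}

theorem eq_zero_of_mulVec_eq_smul_of_apply_zero {R : Type*} [Ring R] [NoZeroDivisors R]
    {S : Matrix (Fin (n + 1)) (Fin (n + 1)) R}
    (hzero : ∀ i j : Fin (n + 1), (i : ℕ) + 1 < j → S i j = 0)
    (hsuper : ∀ k : Fin n, S k.castSucc k.succ ≠ 0) {c : R} {w : Fin (n + 1) → R}
    (hw : S *ᵥ w = c • w) (h0 : w 0 = 0) : w = 0 := by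
  suffices h : ∀ k : Fin (n + 1), ∀ j ≤ k, w j = 0 from funext fun j => h j j le_rfl
  intro k
  induction k using Fin.induction with
  | zero => intro j hj; rwa [Fin.le_zero_iff.mp hj]
  | succ k ih =>
    have hrow : S k.castSucc k.succ * w k.succ = 0 := by
      have := congrFun hw k.castSucc
      rw [Pi.smul_apply, ih _ le_rfl, smul_zero, mulVec, dotProduct,
        Finset.sum_eq_single k.succ] at this
      · exact this
      · intro l _ hl
        rcases le_or_gt l k.castSucc with hle | hgt
        · rw [ih l hle, mul_zero]
        · have hl' : (l : ℕ) ≠ k + 1 := fun h => hl (Fin.ext h)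
          rw [Fin.lt_def, Fin.val_castSucc] at hgt
          rw [hzero _ _ (by rw [Fin.val_castSucc]; omega), zero_mul]
      · simp
    intro j hj
    rcases hj.eq_or_lt with rfl | hlt
    · exact (mul_eq_zero.mp hrow).resolve_left (hsuper k)
    · exact ih j (Fin.le_castSucc_iff.mpr hlt)

theorem IsHermitian.eigenvalues_injective_of_superdiag_ne_zero {𝕜 : Type*} [RCLike 𝕜]
    {S : Matrix (Fin (n + 1)) (Fin (n + 1)) 𝕜} (hS : S.IsHermitian)
    (hzero : ∀ i j : Fin (n + 1), (i : ℕ) + 1 < j → S i j = 0)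
    (hsuper : ∀ k : Fin n, S k.castSucc k.succ ≠ 0) : Function.Injective hS.eigenvalues := by
  intro i j hij
  by_contra hne
  set b := hS.eigenvectorBasis
  have heigen : ∀ k, S *ᵥ ⇑(b k) = (hS.eigenvalues k : 𝕜) • ⇑(b k) := fun k => by
    rw [hS.mulVec_eigenvectorBasis, RCLike.real_smul_eq_coe_smul (K := 𝕜)]
  have hcomb : (b j 0) • ⇑(b i) - (b i 0) • ⇑(b j) = 0 := by
    refine eq_zero_of_mulVec_eq_smul_of_apply_zero hzero hsuper (c := hS.eigenvalues i) ?_ ?_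
    · rw [mulVec_sub, mulVec_smul, mulVec_smul, heigen, heigen, ← hij, smul_sub, smul_comm,
        smul_comm (b i 0)]
    · simp [mul_comm]
  obtain ⟨-, hi0⟩ := (LinearIndepOn.pair_iff _ hne).mp
    (b.orthonormal.linearIndependent.linearIndepOn {i, j}) (b j 0) (-(b i 0)) (by
      ext k
      simpa [sub_eq_add_neg] using congrFun hcomb k)
  refine b.orthonormal.ne_zero i (WithLp.ofLp_injective 2 ?_)
  exact eq_zero_of_mulVec_eq_smul_of_apply_zero hzero hsuper (heigen i) (neg_eq_zero.mp hi0)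

def IsTridiagonal {R : Type*} [Zero R] (T : Matrix (Fin n) (Fin n) R) : Prop :=
  ∀ i j : Fin n, (i : ℕ) + 1 < j ∨ (j : ℕ) + 1 < i → T i j = 0

section Symmetrization

variable {T : Matrix (Fin (n + 1)) (Fin (n + 1)) ℝ}

variable (T) in
noncomputable def tridiagonalSymmetrizer : Fin (n + 1) → ℝ :=
  Fin.partialProd fun k => √(T k.succ k.castSucc / T k.castSucc k.succ)

variable (T) in
noncomputable def tridiagonalSymmetrization : Matrix (Fin (n + 1)) (Fin (n + 1)) ℝ :=
  diagonal (tridiagonalSymmetrizer T)⁻¹ * T * diagonal (tridiagonalSymmetrizer T)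

theorem tridiagonalSymmetrizer_succ (k : Fin n) :
    tridiagonalSymmetrizer T k.succ =
      tridiagonalSymmetrizer T k.castSucc * √(T k.succ k.castSucc / T k.castSucc k.succ) :=
  Fin.partialProd_succ _ k

theorem tridiagonalSymmetrization_apply (i j : Fin (n + 1)) :
    tridiagonalSymmetrization T i j =
      (tridiagonalSymmetrizer T i)⁻¹ * T i j * tridiagonalSymmetrizer T j := by
  simp [tridiagonalSymmetrization, mul_diagonal, diagonal_mul]

theorem tridiagonalSymmetrizer_pos
    (hpos : ∀ k : Fin n, 0 < T k.castSucc k.succ * T k.succ k.castSucc) (i : Fin (n + 1)) :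
    0 < tridiagonalSymmetrizer T i := by
  induction i using Fin.induction with
  | zero => simp [tridiagonalSymmetrizer]
  | succ k ih =>
    rw [tridiagonalSymmetrizer_succ]
    exact mul_pos ih (Real.sqrt_pos.mpr (div_pos_of_mul_pos (hpos k)))

theorem charpoly_tridiagonalSymmetrization
    (hpos : ∀ k : Fin n, 0 < T k.castSucc k.succ * T k.succ k.castSucc) :
    (tridiagonalSymmetrization T).charpoly = T.charpoly := by
  have hinv :
      diagonal (tridiagonalSymmetrizer T) * diagonal (tridiagonalSymmetrizer T)⁻¹ = 1 := by
    rw [diagonal_mul_diagonal, ← diagonal_one]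
    exact congrArg diagonal
      (funext fun i => mul_inv_cancel₀ (tridiagonalSymmetrizer_pos hpos i).ne')
  rw [tridiagonalSymmetrization, charpoly_mul_comm, ← Matrix.mul_assoc, hinv, Matrix.one_mul]

theorem IsTridiagonal.tridiagonalSymmetrization (hT : T.IsTridiagonal) :
    (tridiagonalSymmetrization T).IsTridiagonal := fun i j hij => by
  rw [tridiagonalSymmetrization_apply, hT i j hij, mul_zero, zero_mul]

theorem tridiagonalSymmetrization_superdiag_ne_zero
    (hpos : ∀ k : Fin n, 0 < T k.castSucc k.succ * T k.succ k.castSucc) (k : Fin n) :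
    tridiagonalSymmetrization T k.castSucc k.succ ≠ 0 := by
  rw [tridiagonalSymmetrization_apply]
  exact mul_ne_zero (mul_ne_zero (inv_ne_zero (tridiagonalSymmetrizer_pos hpos _).ne')
    (left_ne_zero_of_mul (hpos k).ne')) (tridiagonalSymmetrizer_pos hpos _).ne'

theorem tridiagonalSymmetrization_subdiag_eq_superdiag
    (hpos : ∀ k : Fin n, 0 < T k.castSucc k.succ * T k.succ k.castSucc) (k : Fin n) :
    tridiagonalSymmetrization T k.succ k.castSucc =
      tridiagonalSymmetrization T k.castSucc k.succ := by
  have hsup : T k.castSucc k.succ ≠ 0 := left_ne_zero_of_mul (hpos k).ne'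
  have hratio := div_pos_of_mul_pos (hpos k)
  have hd := (tridiagonalSymmetrizer_pos hpos k.castSucc).ne'
  have hr := (Real.sqrt_pos.mpr hratio).ne'
  have hsq := Real.sq_sqrt hratio.le
  rw [tridiagonalSymmetrization_apply, tridiagonalSymmetrization_apply,
    tridiagonalSymmetrizer_succ]
  field_simp
  rw [hsq]
  field_simp

theorem isHermitian_tridiagonalSymmetrization (hT : T.IsTridiagonal)
    (hpos : ∀ k : Fin n, 0 < T k.castSucc k.succ * T k.succ k.castSucc) :
    (tridiagonalSymmetrization T).IsHermitian := by
  have hsymm : ∀ i j : Fin (n + 1), i ≤ j →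
      tridiagonalSymmetrization T j i = tridiagonalSymmetrization T i j := by
    intro i j hij
    rcases hij.eq_or_lt with rfl | hlt
    · rfl
    by_cases hadj : (j : ℕ) = i + 1
    · obtain ⟨k, rfl, rfl⟩ : ∃ k : Fin n, k.castSucc = i ∧ k.succ = j :=
        ⟨⟨i, by omega⟩, rfl, Fin.ext hadj.symm⟩
      exact tridiagonalSymmetrization_subdiag_eq_superdiag hpos k
    · have hT' := hT.tridiagonalSymmetrization
      rw [hT' i j (Or.inl (by omega)), hT' j i (Or.inr (by omega))]
  ext i j
  rcases le_total i j with hij | hji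
  · exact hsymm i j hij
  · exact (hsymm j i hji).symm

end Symmetrization

theorem IsTridiagonal.roots_charpoly_nodup_and_real
    {T : Matrix (Fin (n + 1)) (Fin (n + 1)) ℝ} (hT : T.IsTridiagonal)
    (hpos : ∀ k : Fin n, 0 < T k.castSucc k.succ * T k.succ k.castSucc) :
    (T.map (fun x : ℝ => (x : ℂ))).charpoly.roots.Nodup ∧
      ∀ μ ∈ (T.map (fun x : ℝ => (x : ℂ))).charpoly.roots, ∃ s : ℝ, μ = s := by
  have hS := isHermitian_tridiagonalSymmetrization hT hpos
  have hinj := hS.eigenvalues_injective_of_superdiag_ne_zero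
    (fun i j hij => hT.tridiagonalSymmetrization i j (Or.inl hij))
    (tridiagonalSymmetrization_superdiag_ne_zero hpos)
  have hroots : (T.map (fun x : ℝ => (x : ℂ))).charpoly.roots =
      Finset.univ.val.map fun i => (hS.eigenvalues i : ℂ) := by
    rw [show T.map (fun x : ℝ => (x : ℂ)) = T.map (algebraMap ℝ ℂ) from rfl, charpoly_map,
      ← charpoly_tridiagonalSymmetrization hpos, hS.splits_charpoly.roots_map,
      hS.roots_charpoly_eq_eigenvalues, Multiset.map_map]
    rfl
  rw [hroots]
  refine ⟨Finset.univ.nodup.map (Complex.ofReal_injective.comp hinj), fun μ hμ => ?_⟩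
  obtain ⟨i, -, rfl⟩ := Multiset.mem_map.mp hμ
  exact ⟨hS.eigenvalues i, rfl⟩

end Matrix

section A3mat

variable {N : ℕ} {v α : ℝ}

theorem isTridiagonal_A3mat : (A3mat N v α).IsTridiagonal := by
  intro i j hij
  simp only [A3mat, Matrix.of_apply]
  rw [if_neg (by omega), if_neg (by omega), if_neg (by omega)]

theorem A3mat_castSucc_succ (k : Fin N) :
    A3mat N v α k.castSucc k.succ =
      if (k : ℕ) = 0 then α / 3 else ((k : ℝ) + 1) / (2 * k + 3) * α := by
  simp only [A3mat, Matrix.of_apply, Fin.val_castSucc, Fin.val_succ]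
  rw [if_neg (by omega), if_pos trivial]

theorem A3mat_succ_castSucc (k : Fin N) :
    A3mat N v α k.succ k.castSucc =
      if (k : ℕ) = 0 then α else ((k : ℝ) + 1) / (2 * k + 1) * α := by
  simp only [A3mat, Matrix.of_apply, Fin.val_castSucc, Fin.val_succ]
  rw [if_neg (by omega), if_neg (by omega), if_pos trivial]

theorem A3mat_superdiag_mul_subdiag_pos (hα : α ≠ 0) (k : Fin N) :
    0 < A3mat N v α k.castSucc k.succ * A3mat N v α k.succ k.castSucc := by
  have hα2 := mul_self_pos.mpr hα
  rw [A3mat_castSucc_succ, A3mat_succ_castSucc]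
  split_ifs
  · linarith
  · calc (0 : ℝ) < ((k : ℝ) + 1) / (2 * k + 3) * ((k + 1) / (2 * k + 1)) * (α * α) := by
          positivity
      _ = _ := by ring

end A3mat

/-- For `α ≠ 0`, all eigenvalues of `A₃` are real and pairwise distinct, and each
has the form `v + s·α` for some real `s`. -/
theorem A3_eigenvalues_real_distinct (N : ℕ) (v α : ℝ) (hα : α ≠ 0) :
    ((A3mat N v α).map (fun x : ℝ => (x : ℂ))).charpoly.roots.Nodup ∧
      ∀ μ ∈ ((A3mat N v α).map (fun x : ℝ => (x : ℂ))).charpoly.roots,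
        ∃ s : ℝ, μ = ((v + s * α : ℝ) : ℂ) := by
  obtain ⟨hnodup, hreal⟩ :=
    isTridiagonal_A3mat.roots_charpoly_nodup_and_real (A3mat_superdiag_mul_subdiag_pos hα)
  refine ⟨hnodup, fun μ hμ => ?_⟩
  obtain ⟨s, rfl⟩ := hreal μ hμ
  exact ⟨(s - v) / α, by rw [div_mul_cancel₀ _ hα, add_sub_cancel]⟩
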